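/- arXiv:2403.08065 — 2 statements merged into one kernel-verified Lean document; each statement's English description precedes it below -/
import Mathlib

section
/- Let n, p, d, m be positive integers; let A be n×n, C be p×n, D be n×d, B be n×m, and Ẑ be n×p real matrices; let Ŷ ≻ 0 be a symmetric n×n matrix, Ē a symmetric n×n matrix, and let W (d×d), V (p×p), Γ_w (m×m), Γ_v (p×p) be symmetric positive definite matrices. Define B̂ = Ŷ⁻¹Ẑ and E = Ŷ⁻¹. Then the following two conditions are equivalent: (i) the block matrix [[Ē, I], [I, Ŷ]] is positive definite AND the symmetric 6×6 block matrix with upper-triangular blocks given by row 1: [Ŷ, ŶA − ẐC, ŶD, ŶB, Ẑ, Ẑ], row 2: [Ŷ, 0, 0, 0, 0], row 3: [W⁻¹, 0, 0, 0], row 4: [Γ_w, 0, 0], row 5: [V⁻¹, 0], row 6: [Γ_v] is positive definite; (ii) E ≺ Ē AND (A − B̂C)E(A − B̂C)ᵀ + DWDᵀ + BΓ_w⁻¹Bᵀ + B̂VB̂ᵀ + B̂Γ_v⁻¹B̂ᵀ ≺ E. -/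
/-!
Both equivalences are Schur complement arguments. `[[Ē, I], [I, Ŷ]] ≻ 0` iff `Ē - Ŷ⁻¹ ≻ 0`.
For the large LMI, taking Schur complements successively with respect to the positive definite
diagonal blocks `diag(V⁻¹, Γ_v)`, `diag(W⁻¹, Γ_w)` and `Ŷ` leaves a single `n × n` matrix, which
equals `Ŷ (E - Φ) Ŷ` where `Φ` is the right-hand side of the covariance inequality; since `Ŷ`
is invertible, this congruence preserves positive definiteness.
-/

open scoped ComplexOrder

namespace Matrix

section Blocks

variable {l m n o α : Type*}

theorem fromBlocks_sub_fromBlocks_zero [AddGroup α] (A S : Matrix n l α) (B : Matrix n m α)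
    (C : Matrix o l α) (D : Matrix o m α) :
    fromBlocks A B C D - fromBlocks S 0 0 0 = fromBlocks (A - S) B C D := by
  ext (i | i) (j | j) <;> simp

variable [Fintype l] [Fintype m] [Semiring α] [StarRing α]

theorem fromBlocks_zero_zero_mul_diag_mul_conjTranspose (P : Matrix n l α) (Q : Matrix n m α)
    (R : Matrix l l α) (S : Matrix m m α) :
    fromBlocks P Q (0 : Matrix o l α) 0 * fromBlocks R 0 0 S * (fromBlocks P Q 0 0)ᴴ =
      fromBlocks (P * R * Pᴴ + Q * S * Qᴴ) 0 0 (0 : Matrix o o α) := by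
  simp [fromBlocks_multiply, fromBlocks_conjTranspose, Matrix.mul_assoc]

theorem fromRows_zero_mul_mul_conjTranspose (T : Matrix n l α) (R : Matrix l l α) :
    fromRows T (0 : Matrix o l α) * R * (fromRows T 0)ᴴ =
      fromBlocks (T * R * Tᴴ) 0 0 (0 : Matrix o o α) := by
  rw [conjTranspose_fromRows_eq_fromCols_conjTranspose, fromRows_mul, fromRows_mul_fromCols]
  simp

end Blocks

variable {m n : Type*} [Fintype m] [Fintype n] [DecidableEq m] [DecidableEq n]

theorem inv_fromBlocks_diag {α : Type*} [CommRing α] {A : Matrix m m α} {D : Matrix n n α}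
    (hA : IsUnit A) (hD : IsUnit D) : (fromBlocks A 0 0 D)⁻¹ = fromBlocks A⁻¹ 0 0 D⁻¹ := by
  simp [inv_fromBlocks_zero₂₁_of_isUnit_iff A 0 D (iff_of_true hA hD)]

variable {𝕜 : Type*} [RCLike 𝕜]

theorem posDef_iff_posSemidef_and_det_ne_zero {M : Matrix n n 𝕜} :
    M.PosDef ↔ M.PosSemidef ∧ M.det ≠ 0 :=
  ⟨fun h => ⟨h.posSemidef, h.det_pos.ne'⟩, fun h => h.1.posDef_iff_det_ne_zero.mpr h.2⟩

theorem posDef_fromBlocks₂₂_iff (A : Matrix m m 𝕜) (B : Matrix m n 𝕜) {D : Matrix n n 𝕜}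
    (hD : D.PosDef) : (fromBlocks A B Bᴴ D).PosDef ↔ (A - B * D⁻¹ * Bᴴ).PosDef := by
  have : Invertible D := hD.isUnit.invertible
  rw [posDef_iff_posSemidef_and_det_ne_zero, posDef_iff_posSemidef_and_det_ne_zero,
    PosDef.fromBlocks₂₂ A B hD, det_fromBlocks₂₂, invOf_eq_nonsing_inv, mul_ne_zero_iff,
    and_iff_right hD.det_pos.ne']

theorem PosDef.fromBlocks_diag {A : Matrix m m 𝕜} {D : Matrix n n 𝕜} (hA : A.PosDef)
    (hD : D.PosDef) : (fromBlocks A 0 0 D).PosDef := by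
  simpa using (posDef_fromBlocks₂₂_iff A (0 : Matrix m n 𝕜) hD).mpr (by simpa using hA)

end Matrix

open Matrix

theorem estimator_schur_complement_eq {n p q r R : Type*} [Fintype n] [Fintype p] [Fintype q]
    [Fintype r] [DecidableEq n] [CommRing R] [StarRing R] {Y : Matrix n n R} (hY : IsUnit Y)
    (hYh : Y.IsHermitian) (A : Matrix n n R) (C : Matrix p n R) (Z : Matrix n p R)
    (D : Matrix n q R) (B : Matrix n r R) (W : Matrix q q R) (M : Matrix r r R)
    (V U : Matrix p p R) :
    Y - (Z * V * Zᴴ + Z * U * Zᴴ) - (Y * D * W * (Y * D)ᴴ + Y * B * M * (Y * B)ᴴ)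
        - (Y * A - Z * C) * Y⁻¹ * (Y * A - Z * C)ᴴ =
      Y * (Y⁻¹ - ((A - Y⁻¹ * Z * C) * Y⁻¹ * (A - Y⁻¹ * Z * C)ᴴ + D * W * Dᴴ + B * M * Bᴴ
        + Y⁻¹ * Z * V * (Y⁻¹ * Z)ᴴ + Y⁻¹ * Z * U * (Y⁻¹ * Z)ᴴ)) * Yᴴ := by
  have : Invertible Y := hY.invertible
  have hL : A - Y⁻¹ * Z * C = Y⁻¹ * (Y * A - Z * C) := by
    rw [Matrix.mul_sub, ← Matrix.mul_assoc, ← Matrix.mul_assoc, inv_mul_of_invertible,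
      Matrix.one_mul]
  rw [hL]
  generalize Y * A - Z * C = L
  simp only [Matrix.mul_sub, Matrix.sub_mul, Matrix.mul_add, Matrix.add_mul, conjTranspose_mul,
    conjTranspose_nonsing_inv, hYh.eq, ← Matrix.mul_assoc, mul_inv_of_invertible, Matrix.one_mul,
    inv_mul_cancel_right_of_invertible]
  abel

theorem corollary1_estimator_lmi_general
    (n p d m : ℕ)
    (A : Matrix (Fin n) (Fin n) ℝ) (C : Matrix (Fin p) (Fin n) ℝ)
    (D : Matrix (Fin n) (Fin d) ℝ) (B : Matrix (Fin n) (Fin m) ℝ)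
    (Zhat : Matrix (Fin n) (Fin p) ℝ)
    (Yhat : Matrix (Fin n) (Fin n) ℝ) (hYhat : Yhat.PosDef)
    (Ebar : Matrix (Fin n) (Fin n) ℝ)
    (W : Matrix (Fin d) (Fin d) ℝ) (V : Matrix (Fin p) (Fin p) ℝ)
    (Gw : Matrix (Fin m) (Fin m) ℝ) (Gv : Matrix (Fin p) (Fin p) ℝ)
    (hW : W.PosDef) (hV : V.PosDef) (hGw : Gw.PosDef) (hGv : Gv.PosDef)
    (Bhat : Matrix (Fin n) (Fin p) ℝ) (E : Matrix (Fin n) (Fin n) ℝ)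
    (hBhatdef : Bhat = Yhat⁻¹ * Zhat) (hEdef : E = Yhat⁻¹) :
    ((fromBlocks Ebar 1 1 Yhat).PosDef ∧
      (fromBlocks
        (fromBlocks
          (fromBlocks Yhat (Yhat * A - Zhat * C) (Yhat * A - Zhat * C)ᵀ Yhat)
          (fromBlocks (Yhat * D) (Yhat * B) 0 0)
          (fromBlocks (Yhat * D) (Yhat * B) 0 0)ᵀ
          (fromBlocks W⁻¹ 0 0 Gw))
        (fromRows (fromBlocks Zhat Zhat 0 0) 0)
        (fromRows (fromBlocks Zhat Zhat 0 0) 0)ᵀ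
        (fromBlocks V⁻¹ 0 0 Gv)).PosDef)
    ↔
    ((Ebar - E).PosDef ∧
      (E - ((A - Bhat * C) * E * (A - Bhat * C)ᵀ + D * W * Dᵀ + B * Gw⁻¹ * Bᵀ
        + Bhat * V * Bhatᵀ + Bhat * Gv⁻¹ * Bhatᵀ)).PosDef) := by
  subst hBhatdef hEdef
  simp only [← conjTranspose_eq_transpose_of_trivial]
  refine and_congr (by simpa using posDef_fromBlocks₂₂_iff Ebar 1 hYhat) ?_
  rw [posDef_fromBlocks₂₂_iff _ _ (hV.inv.fromBlocks_diag hGv),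
    inv_fromBlocks_diag hV.inv.isUnit hGv.isUnit, fromRows_zero_mul_mul_conjTranspose,
    fromBlocks_sub_fromBlocks_zero]
  rw [posDef_fromBlocks₂₂_iff _ _ (hW.inv.fromBlocks_diag hGw),
    inv_fromBlocks_diag hW.inv.isUnit hGw.isUnit, fromBlocks_zero_zero_mul_diag_mul_conjTranspose,
    fromBlocks_zero_zero_mul_diag_mul_conjTranspose, fromBlocks_sub_fromBlocks_zero,
    fromBlocks_sub_fromBlocks_zero]
  rw [posDef_fromBlocks₂₂_iff _ _ hYhat, nonsing_inv_nonsing_inv _ hV.det_pos.ne'.isUnit,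
    nonsing_inv_nonsing_inv _ hW.det_pos.ne'.isUnit,
    estimator_schur_complement_eq hYhat.isUnit hYhat.isHermitian]
  exact IsUnit.posDef_star_right_conjugate_iff hYhat.isUnit

/-- Corollary 1: estimator design for an unstable system with estimator gain
`B̂ = Ŷ⁻¹Ẑ`, error covariance bound `Ē`, process noise covariance `W`,
input privacy noise covariance `Γ_w⁻¹`, measurement noise covariance `V`,
and output privacy noise covariance `Γ_v⁻¹`. -/
theorem corollary1_estimator_lmi
    (n p d m : ℕ) (hn : 0 < n) (hp : 0 < p) (hd : 0 < d) (hm : 0 < m)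
    (A : Matrix (Fin n) (Fin n) ℝ) (C : Matrix (Fin p) (Fin n) ℝ)
    (D : Matrix (Fin n) (Fin d) ℝ) (B : Matrix (Fin n) (Fin m) ℝ)
    (Zhat : Matrix (Fin n) (Fin p) ℝ)
    (Yhat : Matrix (Fin n) (Fin n) ℝ) (hYhat : Yhat.PosDef)
    (Ebar : Matrix (Fin n) (Fin n) ℝ) (hEbar : Ebar.IsHermitian)
    (W : Matrix (Fin d) (Fin d) ℝ) (V : Matrix (Fin p) (Fin p) ℝ)
    (Gw : Matrix (Fin m) (Fin m) ℝ) (Gv : Matrix (Fin p) (Fin p) ℝ)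
    (hW : W.PosDef) (hV : V.PosDef) (hGw : Gw.PosDef) (hGv : Gv.PosDef)
    (Bhat : Matrix (Fin n) (Fin p) ℝ) (E : Matrix (Fin n) (Fin n) ℝ)
    (hBhatdef : Bhat = Yhat⁻¹ * Zhat) (hEdef : E = Yhat⁻¹) :
    ((fromBlocks Ebar 1 1 Yhat).PosDef ∧
      (fromBlocks
        (fromBlocks
          (fromBlocks Yhat (Yhat * A - Zhat * C) (Yhat * A - Zhat * C)ᵀ Yhat)
          (fromBlocks (Yhat * D) (Yhat * B) 0 0)
          (fromBlocks (Yhat * D) (Yhat * B) 0 0)ᵀ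
          (fromBlocks W⁻¹ 0 0 Gw))
        (fromRows (fromBlocks Zhat Zhat 0 0) 0)
        (fromRows (fromBlocks Zhat Zhat 0 0) 0)ᵀ
        (fromBlocks V⁻¹ 0 0 Gv)).PosDef)
    ↔
    ((Ebar - E).PosDef ∧
      (E - ((A - Bhat * C) * E * (A - Bhat * C)ᵀ + D * W * Dᵀ + B * Gw⁻¹ * Bᵀ
        + Bhat * V * Bhatᵀ + Bhat * Gv⁻¹ * Bhatᵀ)).PosDef) :=
  corollary1_estimator_lmi_general n p d m A C D B Zhat Yhat hYhat Ebar W V Gw Gv hW hV hGw hGv Bhat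
    E hBhatdef hEdef
end

section
/- Let n, m, p, d be positive integers. Let A (n×n), B (n×m), C (p×n), D (n×d) be real matrices; let W (d×d), V (p×p), Γ_w (m×m), Γ_v (p×p) be symmetric positive definite matrices, Ē a symmetric n×n matrix, X̂ and Ŷ symmetric n×n matrices, Q̂ an n×n matrix, F̂ an n×p matrix, and Û an invertible n×n matrix. Assume: (i) the symmetric 8×8 block matrix with upper-triangular blocks given by row 1: [X̂, I, A·X̂, A, D, B, 0, 0], row 2: [Ŷ, Q̂, Ŷ·A + F̂·C, Ŷ·D, Ŷ·B, F̂, F̂], row 3: [X̂, I, 0, 0, 0, 0], row 4: [Ŷ, 0, 0, 0, 0], row 5: [W⁻¹, 0, 0, 0], row 6: [Γ_w, 0, 0], row 7: [V⁻¹, 0], row 8: [Γ_v] is positive definite; and (ii) the block matrix [[Ē, X̂ − Û, I], [(X̂ − Û)ᵀ, X̂, I], [I, I, Ŷ]] is positive definite. Then Ŝ := (I − Ŷ·X̂)·Û⁻¹ is invertible, and defining Â = Ŝ⁻¹·(Q̂ − Ŷ·A·X̂ − F̂·C·X̂)·Û⁻¹, B̂ = Ŝ⁻¹·F̂, and the augmented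 matrices 𝐀̂ = [[A, 0], [B̂·C, Â]] (2n×2n), 𝐁̂ = [[D, B, 0, 0], [0, 0, B̂, B̂]] (2n×(d+m+p+p)), 𝐂̂ = [I, −I] (n×2n), 𝐖 = blockdiag(W, Γ_w⁻¹, V, Γ_v⁻¹), there exists a symmetric positive definite 2n×2n matrix 𝐗̂ such that 𝐗̂ − 𝐀̂𝐗̂𝐀̂ᵀ − 𝐁̂𝐖𝐁̂ᵀ is positive definite and Ē − 𝐂̂𝐗̂𝐂̂ᵀ is positive definite. -/
/-!
With `P = [[X̂, I], [I, Ŷ]]` and the congruence `M = [[I, 0], [Ŷ, Ŝ]]`, the definition of `Ŝ`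
gives `P = M · [[X̂, I], [Û, 0]]`, and the candidate covariance is `𝐗̂ = M⁻¹ P M⁻ᵀ`. The
reconstruction formulas for `Â` and `B̂` turn the off-diagonal blocks of (12) and (13) into
`M 𝐀̂ M⁻¹ P`, `M 𝐁̂` and `𝐂̂ M⁻¹ P`, so the Schur complements of (12) and (13) are exactly
`M (𝐗̂ − 𝐀̂𝐗̂𝐀̂ᵀ − 𝐁̂𝐖𝐁̂ᵀ) Mᵀ` and `Ē − 𝐂̂𝐗̂𝐂̂ᵀ`. Invertibility of `Ŝ` comes from
`I − ŶX̂ = −Ŷ (X̂ − Ŷ⁻¹)`, where `X̂ − Ŷ⁻¹ ≻ 0` is a Schur complement of `P ≻ 0`.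
-/

open Matrix

namespace Matrix

variable {l r s t : Type*}

section Blocks

variable {R : Type*} [Ring R] [PartialOrder R] [StarRing R]
  {A : Matrix l l R} {B : Matrix l r R} {C : Matrix r l R} {D : Matrix r r R}

lemma PosDef.of_fromBlocks₁₁ (h : (fromBlocks A B C D).PosDef) : A.PosDef :=
  h.submatrix Sum.inl_injective

lemma PosDef.of_fromBlocks₂₂ (h : (fromBlocks A B C D).PosDef) : D.PosDef :=
  h.submatrix Sum.inr_injective

end Blocks

section Inverse

variable {R : Type*} [CommRing R] [Fintype l] [Fintype r] [DecidableEq l] [DecidableEq r]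

lemma inv_fromBlocks_zero_zero {A : Matrix l l R} {D : Matrix r r R} (hA : IsUnit A)
    (hD : IsUnit D) : (fromBlocks A 0 0 D)⁻¹ = fromBlocks A⁻¹ 0 0 D⁻¹ := by
  simp [inv_fromBlocks_zero₁₂_of_isUnit_iff A 0 D (iff_of_true hA hD)]

lemma inv_fromBlocks_fromBlocks_inv [Fintype s] [Fintype t] [DecidableEq s] [DecidableEq t]
    {W : Matrix l l R} {G : Matrix r r R} {V : Matrix s s R} {H : Matrix t t R}
    (hW : IsUnit W) (hG : IsUnit G) (hV : IsUnit V) (hH : IsUnit H) :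
    (fromBlocks (fromBlocks W⁻¹ 0 0 G) 0 0 (fromBlocks V⁻¹ 0 0 H))⁻¹
      = fromBlocks (fromBlocks W 0 0 G⁻¹) 0 0 (fromBlocks V 0 0 H⁻¹) := by
  have hWi := isUnit_nonsing_inv_iff.2 hW
  have hVi := isUnit_nonsing_inv_iff.2 hV
  rw [inv_fromBlocks_zero_zero (isUnit_fromBlocks_zero₂₁.2 ⟨hWi, hG⟩)
      (isUnit_fromBlocks_zero₂₁.2 ⟨hVi, hH⟩), inv_fromBlocks_zero_zero hWi hG,
    inv_fromBlocks_zero_zero hVi hH, nonsing_inv_nonsing_inv W ((isUnit_iff_isUnit_det W).1 hW),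
    nonsing_inv_nonsing_inv V ((isUnit_iff_isUnit_det V).1 hV)]

omit [Fintype r] [DecidableEq r] in
lemma mul_mul_inv_mul_conjTranspose_of_eq_mul [StarRing R] {P M T : Matrix l l R}
    (hP : P.IsHermitian) (hPu : IsUnit P) (hM : IsUnit M) (hPM : P = M * T)
    (G : Matrix r l R) :
    G * T * P⁻¹ * (G * T)ᴴ = G * (M⁻¹ * P * (M⁻¹)ᴴ) * Gᴴ := by
  obtain rfl : T = M⁻¹ * P := by
    rw [hPM, nonsing_inv_mul_cancel_left M T ((isUnit_iff_isUnit_det M).1 hM)]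
  conv_lhs => rw [conjTranspose_mul, conjTranspose_mul, hP.eq]
  simp only [Matrix.mul_assoc, mul_nonsing_inv_cancel_left P _ ((isUnit_iff_isUnit_det P).1 hPu)]

end Inverse

section Schur

variable {K : Type*} [Field K] [PartialOrder K] [StarRing K]
  [Fintype l] [Fintype r] [Fintype s] [DecidableEq l] [DecidableEq r] [DecidableEq s]

lemma PosDef.schur_complement₂₂ {A : Matrix l l K} {B : Matrix l r K} {D : Matrix r r K}
    (h : (fromBlocks A B Bᴴ D).PosDef) : (A - B * D⁻¹ * Bᴴ).PosDef := by
  have hD := h.of_fromBlocks₂₂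
  let := hD.isUnit.invertible
  have hL : IsUnit (fromBlocks 1 0 (⅟D * Bᴴ) 1 : Matrix (l ⊕ r) (l ⊕ r) K) := by
    simp [isUnit_iff_isUnit_det]
  have hstar : star (fromBlocks 1 0 (⅟D * Bᴴ) 1 : Matrix (l ⊕ r) (l ⊕ r) K)
      = fromBlocks 1 (B * ⅟D) 0 1 := by
    simp [star_eq_conjTranspose, fromBlocks_conjTranspose, invOf_eq_nonsing_inv,
      hD.isHermitian.inv.eq]
  rw [fromBlocks_eq_of_invertible₂₂, ← hstar, hL.posDef_star_left_conjugate_iff,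
    invOf_eq_nonsing_inv] at h
  exact h.of_fromBlocks₁₁

lemma PosDef.schur_complement_fromRows {P : Matrix l l K} {L : Matrix l r K} {Q : Matrix r r K}
    {N : Matrix l s K} {R : Matrix s s K}
    (h : (fromBlocks (fromBlocks P L Lᴴ Q) (fromRows N 0) (fromRows N 0)ᴴ R).PosDef) :
    (P - N * R⁻¹ * Nᴴ - L * Q⁻¹ * Lᴴ).PosDef := by
  have h' := h.schur_complement₂₂
  rw [conjTranspose_fromRows_eq_fromCols_conjTranspose, fromRows_mul, fromRows_mul_fromCols]
    at h'
  simp only [conjTranspose_zero, Matrix.mul_zero, Matrix.zero_mul, sub_eq_add_neg,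
    fromBlocks_neg, fromBlocks_add, neg_zero, add_zero] at h'
  simpa only [sub_eq_add_neg] using h'.schur_complement₂₂

lemma isUnit_one_sub_mul_of_posDef_fromBlocks {X Y : Matrix l l K}
    (h : (fromBlocks X 1 1 Y).PosDef) : IsUnit (1 - Y * X) := by
  have hY := h.of_fromBlocks₂₂
  have hXY : (X - Y⁻¹).PosDef := by
    have h' : (fromBlocks X 1 (1 : Matrix l l K)ᴴ Y).PosDef := by rwa [conjTranspose_one]
    simpa using h'.schur_complement₂₂
  rw [show 1 - Y * X = -(Y * (X - Y⁻¹)) by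
    rw [Matrix.mul_sub, mul_nonsing_inv _ ((isUnit_iff_isUnit_det Y).1 hY.isUnit), neg_sub]]
  exact (hY.isUnit.mul hXY.isUnit).neg

lemma PosDef.sub_conj_of_fromBlocks_mul {E : Matrix r r K} {G : Matrix r l K}
    {P M T : Matrix l l K} (hM : IsUnit M) (hPM : P = M * T)
    (h : (fromBlocks E (G * T) (G * T)ᴴ P).PosDef) :
    (E - G * (M⁻¹ * P * (M⁻¹)ᴴ) * Gᴴ).PosDef := by
  have hP := h.of_fromBlocks₂₂
  rw [← mul_mul_inv_mul_conjTranspose_of_eq_mul hP.isHermitian hP.isUnit hM hPM]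
  exact h.schur_complement₂₂

lemma PosDef.lyapunov_of_fromBlocks_mul {P M T F : Matrix l l K} {N : Matrix l s K}
    {R : Matrix s s K} (hM : IsUnit M) (hPM : P = M * T)
    (h : (fromBlocks (fromBlocks P (M * F * T) (M * F * T)ᴴ P)
      (fromRows (M * N) 0) (fromRows (M * N) 0)ᴴ R).PosDef) :
    (M⁻¹ * P * (M⁻¹)ᴴ - F * (M⁻¹ * P * (M⁻¹)ᴴ) * Fᴴ - N * R⁻¹ * Nᴴ).PosDef := by
  have hP : P.PosDef := h.of_fromBlocks₁₁.of_fromBlocks₁₁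
  have h' := h.schur_complement_fromRows
  rw [mul_mul_inv_mul_conjTranspose_of_eq_mul hP.isHermitian hP.isUnit hM hPM (M * F)] at h'
  refine hM.posDef_star_right_conjugate_iff.mp ?_
  convert h' using 1
  have hMd := (isUnit_iff_isUnit_det M).1 hM
  simp only [star_eq_conjTranspose, Matrix.mul_sub, Matrix.sub_mul, conjTranspose_mul,
    Matrix.mul_assoc, mul_nonsing_inv_cancel_left M _ hMd]
  have hMM : (M⁻¹)ᴴ * Mᴴ = 1 := by
    rw [← conjTranspose_mul, mul_nonsing_inv M hMd, conjTranspose_one]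
  rw [hMM, Matrix.mul_one, sub_right_comm]

end Schur

end Matrix

section Reconstruction

variable {R : Type*} [CommRing R] {n m p d : Type*} [Fintype n] [DecidableEq n]
  {X Y S U Q Ah : Matrix n n R} {F Bh : Matrix n p R} {A : Matrix n n R} {B : Matrix n m R}
  {C : Matrix p n R} {D : Matrix n d R}

lemma fromBlocks_one_one_eq_mul (hSU : S * U = 1 - Y * X) :
    fromBlocks X 1 1 Y = fromBlocks 1 0 Y S * fromBlocks X 1 U 0 := by
  simp [fromBlocks_multiply, hSU]

lemma fromBlocks_lmi_eq_mul [Fintype p] (hSB : S * Bh = F)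
    (hSAU : S * Ah * U = Q - Y * A * X - F * C * X) :
    fromBlocks (A * X) A Q (Y * A + F * C)
      = fromBlocks 1 0 Y S * fromBlocks A 0 (Bh * C) Ah * fromBlocks X 1 U 0 := by
  simp only [fromBlocks_multiply, Matrix.one_mul, Matrix.zero_mul, Matrix.mul_zero,
    Matrix.mul_one, add_zero, zero_add]
  rw [Matrix.add_mul, ← Matrix.mul_assoc S Bh C, hSB, hSAU]
  congr 1
  simp only [Matrix.mul_assoc]
  abel

lemma fromBlocks_noise_eq_fromRows (hSB : S * Bh = F) :
    fromBlocks (fromBlocks D B (Y * D) (Y * B)) (fromBlocks 0 0 F F) 0 0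
      = fromRows (fromBlocks 1 0 Y S * fromBlocks (fromCols D B) 0 0 (fromCols Bh Bh))
        (0 : Matrix (n ⊕ n) ((d ⊕ m) ⊕ (p ⊕ p)) R) := by
  ext ((i | i) | i) ((j | j) | (j | j)) <;> simp [fromBlocks_multiply, ← hSB]

lemma fromCols_sub_one_eq_mul :
    fromCols (X - U) (1 : Matrix n n R)
      = (fromCols 1 (-1) : Matrix n (n ⊕ n) R) * fromBlocks X 1 U 0 := by
  rw [fromCols_mul_fromBlocks]
  simp [sub_eq_add_neg]

end Reconstruction

theorem theorem1_estimator_synthesis_general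
    (n m p d : ℕ)
    (A : Matrix (Fin n) (Fin n) ℝ) (B : Matrix (Fin n) (Fin m) ℝ)
    (C : Matrix (Fin p) (Fin n) ℝ) (D : Matrix (Fin n) (Fin d) ℝ)
    (W : Matrix (Fin d) (Fin d) ℝ) (V : Matrix (Fin p) (Fin p) ℝ)
    (Gw : Matrix (Fin m) (Fin m) ℝ) (Gv : Matrix (Fin p) (Fin p) ℝ)
    (hW : W.PosDef) (hV : V.PosDef) (hGw : Gw.PosDef) (hGv : Gv.PosDef)
    (Ebar : Matrix (Fin n) (Fin n) ℝ)
    (Xhat Yhat : Matrix (Fin n) (Fin n) ℝ)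
    (Qhat : Matrix (Fin n) (Fin n) ℝ) (Fhat : Matrix (Fin n) (Fin p) ℝ)
    (Uhat : Matrix (Fin n) (Fin n) ℝ) (hUhatUnit : IsUnit Uhat)
    -- LMI (12)
    (hLMI1 :
      (fromBlocks
        (fromBlocks
          (fromBlocks Xhat 1 1 Yhat)
          (fromBlocks (A * Xhat) A Qhat (Yhat * A + Fhat * C))
          (fromBlocks (A * Xhat) A Qhat (Yhat * A + Fhat * C))ᵀ
          (fromBlocks Xhat 1 1 Yhat))
        (fromBlocks (fromBlocks D B (Yhat * D) (Yhat * B)) (fromBlocks 0 0 Fhat Fhat) 0 0)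
        (fromBlocks (fromBlocks D B (Yhat * D) (Yhat * B)) (fromBlocks 0 0 Fhat Fhat) 0 0)ᵀ
        (fromBlocks (fromBlocks W⁻¹ 0 0 Gw) 0 0 (fromBlocks V⁻¹ 0 0 Gv))).PosDef)
    -- LMI (13)
    (hLMI2 :
      (fromBlocks Ebar (fromCols (Xhat - Uhat) 1)
        (fromRows (Xhat - Uhat)ᵀ 1) (fromBlocks Xhat 1 1 Yhat)).PosDef)
    -- estimator reconstruction (14)–(15)
    (Shat : Matrix (Fin n) (Fin n) ℝ) (hShat : Shat = (1 - Yhat * Xhat) * Uhat⁻¹)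
    (Ahat : Matrix (Fin n) (Fin n) ℝ)
    (hAhat : Ahat = Shat⁻¹ * (Qhat - Yhat * A * Xhat - Fhat * C * Xhat) * Uhat⁻¹)
    (Bhat : Matrix (Fin n) (Fin p) ℝ) (hBhat : Bhat = Shat⁻¹ * Fhat) :
    IsUnit Shat ∧
    ∃ Xb : Matrix (Fin n ⊕ Fin n) (Fin n ⊕ Fin n) ℝ,
      Xb.PosDef ∧
      (Xb - (fromBlocks A 0 (Bhat * C) Ahat) * Xb * (fromBlocks A 0 (Bhat * C) Ahat)ᵀ
        - (fromBlocks (fromCols D B) 0 0 (fromCols Bhat Bhat) :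
            Matrix (Fin n ⊕ Fin n) ((Fin d ⊕ Fin m) ⊕ (Fin p ⊕ Fin p)) ℝ)
          * (fromBlocks (fromBlocks W 0 0 Gw⁻¹) 0 0 (fromBlocks V 0 0 Gv⁻¹))
          * (fromBlocks (fromCols D B) 0 0 (fromCols Bhat Bhat) :
            Matrix (Fin n ⊕ Fin n) ((Fin d ⊕ Fin m) ⊕ (Fin p ⊕ Fin p)) ℝ)ᵀ).PosDef ∧
      (Ebar - (fromCols 1 (-1) : Matrix (Fin n) (Fin n ⊕ Fin n) ℝ) * Xb
        * (fromCols 1 (-1) : Matrix (Fin n) (Fin n ⊕ Fin n) ℝ)ᵀ).PosDef := by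
  have hP : (fromBlocks Xhat 1 1 Yhat).PosDef := hLMI2.of_fromBlocks₂₂
  have hU := (isUnit_iff_isUnit_det Uhat).1 hUhatUnit
  have hSU : Shat * Uhat = 1 - Yhat * Xhat := by rw [hShat, nonsing_inv_mul_cancel_right _ _ hU]
  have hS : IsUnit Shat :=
    hShat ▸ (isUnit_one_sub_mul_of_posDef_fromBlocks hP).mul (isUnit_nonsing_inv_iff.2 hUhatUnit)
  have hSd := (isUnit_iff_isUnit_det Shat).1 hS
  have hSB : Shat * Bhat = Fhat := by rw [hBhat, mul_nonsing_inv_cancel_left _ _ hSd]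
  have hSAU : Shat * Ahat * Uhat = Qhat - Yhat * A * Xhat - Fhat * C * Xhat := by
    rw [hAhat, ← Matrix.mul_assoc, ← Matrix.mul_assoc, mul_nonsing_inv _ hSd, Matrix.one_mul,
      nonsing_inv_mul_cancel_right _ _ hU]
  set M : Matrix (Fin n ⊕ Fin n) (Fin n ⊕ Fin n) ℝ := fromBlocks 1 0 Yhat Shat
  have hM : IsUnit M := isUnit_fromBlocks_zero₁₂.2 ⟨isUnit_one, hS⟩
  have hPM : fromBlocks Xhat 1 1 Yhat = M * fromBlocks Xhat 1 Uhat 0 :=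
    fromBlocks_one_one_eq_mul hSU
  refine ⟨hS, M⁻¹ * fromBlocks Xhat 1 1 Yhat * (M⁻¹)ᵀ, ?_, ?_, ?_⟩
  · simpa only [star_eq_conjTranspose, conjTranspose_eq_transpose_of_trivial] using
      (isUnit_nonsing_inv_iff.2 hM).posDef_star_right_conjugate_iff.2 hP
  · rw [fromBlocks_lmi_eq_mul hSB hSAU, fromBlocks_noise_eq_fromRows hSB] at hLMI1
    simp only [← conjTranspose_eq_transpose_of_trivial] at hLMI1
    simpa only [conjTranspose_eq_transpose_of_trivial,
      inv_fromBlocks_fromBlocks_inv hW.isUnit hGw.isUnit hV.isUnit hGv.isUnit] using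
      hLMI1.lyapunov_of_fromBlocks_mul hM hPM
  · rw [show fromRows (Xhat - Uhat)ᵀ 1 = (fromCols (Xhat - Uhat) 1)ᵀ by
      rw [transpose_fromCols, transpose_one], fromCols_sub_one_eq_mul] at hLMI2
    simp only [← conjTranspose_eq_transpose_of_trivial] at hLMI2
    simpa only [conjTranspose_eq_transpose_of_trivial] using
      hLMI2.sub_conj_of_fromBlocks_mul hM hPM

/-- Estimator-synthesis content of Theorem 1: feasibility of the LMIs (12)–(13)
yields, through the reconstruction (14)–(15), an adversary estimator such that
the joint (state, estimate) covariance is bounded by `𝐗̂` and the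
estimation-error covariance `𝐂̂𝐗̂𝐂̂ᵀ` is bounded by `Ē`; the privacy noise
covariances are `Wᵖ = Γ_w⁻¹` and `Vᵖ = Γ_v⁻¹`. -/
theorem theorem1_estimator_synthesis
    (n m p d : ℕ) (hn : 0 < n) (hm : 0 < m) (hp : 0 < p) (hd : 0 < d)
    (A : Matrix (Fin n) (Fin n) ℝ) (B : Matrix (Fin n) (Fin m) ℝ)
    (C : Matrix (Fin p) (Fin n) ℝ) (D : Matrix (Fin n) (Fin d) ℝ)
    (W : Matrix (Fin d) (Fin d) ℝ) (V : Matrix (Fin p) (Fin p) ℝ)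
    (Gw : Matrix (Fin m) (Fin m) ℝ) (Gv : Matrix (Fin p) (Fin p) ℝ)
    (hW : W.PosDef) (hV : V.PosDef) (hGw : Gw.PosDef) (hGv : Gv.PosDef)
    (Ebar : Matrix (Fin n) (Fin n) ℝ) (hEbar : Ebar.IsHermitian)
    (Xhat Yhat : Matrix (Fin n) (Fin n) ℝ)
    (hXhatsymm : Xhat.IsHermitian) (hYhatsymm : Yhat.IsHermitian)
    (Qhat : Matrix (Fin n) (Fin n) ℝ) (Fhat : Matrix (Fin n) (Fin p) ℝ)
    (Uhat : Matrix (Fin n) (Fin n) ℝ) (hUhatUnit : IsUnit Uhat)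
    -- LMI (12)
    (hLMI1 :
      (fromBlocks
        (fromBlocks
          (fromBlocks Xhat 1 1 Yhat)
          (fromBlocks (A * Xhat) A Qhat (Yhat * A + Fhat * C))
          (fromBlocks (A * Xhat) A Qhat (Yhat * A + Fhat * C))ᵀ
          (fromBlocks Xhat 1 1 Yhat))
        (fromBlocks (fromBlocks D B (Yhat * D) (Yhat * B)) (fromBlocks 0 0 Fhat Fhat) 0 0)
        (fromBlocks (fromBlocks D B (Yhat * D) (Yhat * B)) (fromBlocks 0 0 Fhat Fhat) 0 0)ᵀ
        (fromBlocks (fromBlocks W⁻¹ 0 0 Gw) 0 0 (fromBlocks V⁻¹ 0 0 Gv))).PosDef)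
    -- LMI (13)
    (hLMI2 :
      (fromBlocks Ebar (fromCols (Xhat - Uhat) 1)
        (fromRows (Xhat - Uhat)ᵀ 1) (fromBlocks Xhat 1 1 Yhat)).PosDef)
    -- estimator reconstruction (14)–(15)
    (Shat : Matrix (Fin n) (Fin n) ℝ) (hShat : Shat = (1 - Yhat * Xhat) * Uhat⁻¹)
    (Ahat : Matrix (Fin n) (Fin n) ℝ)
    (hAhat : Ahat = Shat⁻¹ * (Qhat - Yhat * A * Xhat - Fhat * C * Xhat) * Uhat⁻¹)
    (Bhat : Matrix (Fin n) (Fin p) ℝ) (hBhat : Bhat = Shat⁻¹ * Fhat) :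
    IsUnit Shat ∧
    ∃ Xb : Matrix (Fin n ⊕ Fin n) (Fin n ⊕ Fin n) ℝ,
      Xb.PosDef ∧
      (Xb - (fromBlocks A 0 (Bhat * C) Ahat) * Xb * (fromBlocks A 0 (Bhat * C) Ahat)ᵀ
        - (fromBlocks (fromCols D B) 0 0 (fromCols Bhat Bhat) :
            Matrix (Fin n ⊕ Fin n) ((Fin d ⊕ Fin m) ⊕ (Fin p ⊕ Fin p)) ℝ)
          * (fromBlocks (fromBlocks W 0 0 Gw⁻¹) 0 0 (fromBlocks V 0 0 Gv⁻¹))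
          * (fromBlocks (fromCols D B) 0 0 (fromCols Bhat Bhat) :
            Matrix (Fin n ⊕ Fin n) ((Fin d ⊕ Fin m) ⊕ (Fin p ⊕ Fin p)) ℝ)ᵀ).PosDef ∧
      (Ebar - (fromCols 1 (-1) : Matrix (Fin n) (Fin n ⊕ Fin n) ℝ) * Xb
        * (fromCols 1 (-1) : Matrix (Fin n) (Fin n ⊕ Fin n) ℝ)ᵀ).PosDef :=
  theorem1_estimator_synthesis_general n m p d A B C D W V Gw Gv hW hV hGw hGv Ebar Xhat Yhat Qhat
    Fhat Uhat hUhatUnit hLMI1 hLMI2 Shat hShat Ahat hAhat Bhat hBhat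
end
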